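/- arXiv:2011.06435 — 2 statements merged into one kernel-verified Lean document; each statement's English description precedes it below -/
import Mathlib

section
/- Every graph of odd order is switching-equivalent to a graph in which every vertex has even degree, and this even graph is unique in its switching class. -/
open Matrix Finset

/-- Seidel switching of a graph with respect to a set of vertices `A`. -/
def switchGraph {n : ℕ} (G : SimpleGraph (Fin n)) (A : Finset (Fin n)) :
    SimpleGraph (Fin n) where
  Adj v w := v ≠ w ∧ (G.Adj v w ↔ ((v ∈ A) ↔ (w ∈ A)))
  symm := by
    constructor
    intro v w ⟨h1, h2⟩
    exact ⟨h1.symm, by rw [G.adj_comm]; tauto⟩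
  loopless := ⟨fun v h => h.1 rfl⟩

/-!
Modulo 2, switching with respect to `A` changes the degree of `v` by `n·[v ∈ A] + |A|`. For odd `n`,
switching with respect to the set of odd-degree vertices, which has even size by the handshake
lemma, therefore gives a graph with all degrees even. Conversely, if `H` and its switching by `C`
both have all degrees even, then `[v ∈ C] ≡ |C|` for every vertex, so `C` is empty or everything and
switching by `C` is the identity. As switchings compose by symmetric difference, any two even graphs
in a switching class are related in this way and hence coincide.
-/

open scoped Classical

lemma SimpleGraph.ncard_neighborSet_eq_degree {V : Type*} [Fintype V] (H : SimpleGraph V)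
    [DecidableRel H.Adj] (v : V) : (H.neighborSet v).ncard = H.degree v := by
  rw [← Nat.card_coe_set_eq, Nat.card_eq_fintype_card, H.card_neighborSet_eq_degree]

lemma SimpleGraph.degree_eq_sum_ite {V R : Type*} [Fintype V] [AddCommMonoidWithOne R]
    (H : SimpleGraph V) [DecidableRel H.Adj] (v : V) :
    (H.degree v : R) = ∑ w, if H.Adj v w then 1 else 0 := by
  rw [sum_boole, ← H.card_neighborFinset_eq_degree, H.neighborFinset_eq_filter]

section Switching

variable {n : ℕ} (G : SimpleGraph (Fin n))

lemma switchGraph_switchGraph (A B : Finset (Fin n)) :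
    switchGraph (switchGraph G A) B = switchGraph G (symmDiff A B) := by
  ext v w
  simp only [switchGraph, mem_symmDiff]
  tauto

lemma switchGraph_eq_self {A : Finset (Fin n)} (hA : ∀ v w, v ∈ A ↔ w ∈ A) :
    switchGraph G A = G := by
  ext v w
  simp only [switchGraph, hA v w, iff_true, and_iff_right_iff_imp]
  exact fun h => h.ne

lemma ite_adj_switchGraph (A : Finset (Fin n)) (v w : Fin n) :
    (if (switchGraph G A).Adj v w then 1 else 0 : ZMod 2) =
      (if G.Adj v w then 1 else 0) + (if v ∈ A then 1 else 0) + (if w ∈ A then 1 else 0) := by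
  rcases eq_or_ne v w with rfl | hvw
  · simp [switchGraph, CharTwo.add_self_eq_zero]
  · by_cases hG : G.Adj v w <;> by_cases hv : v ∈ A <;> by_cases hw : w ∈ A <;>
      simp [switchGraph, hvw, hG, hv, hw, CharTwo.add_self_eq_zero]

lemma degree_switchGraph (A : Finset (Fin n)) (v : Fin n) :
    ((switchGraph G A).degree v : ZMod 2) =
      G.degree v + n * (if v ∈ A then 1 else 0) + #A := by
  simp only [SimpleGraph.degree_eq_sum_ite, ite_adj_switchGraph, sum_add_distrib, sum_const,
    card_univ, Fintype.card_fin, nsmul_eq_mul, sum_boole, filter_univ_mem]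

lemma even_degree_switchGraph_oddDegreeVertices (hn : Odd n) (v : Fin n) :
    Even ((switchGraph G {w | Odd (G.degree w)}).degree v) := by
  have hcard : (#{w | Odd (G.degree w)} : ZMod 2) = 0 :=
    G.even_card_odd_degree_vertices.natCast_zmod_two
  have hmem :
      (if v ∈ ({w | Odd (G.degree w)} : Finset _) then 1 else 0 : ZMod 2) = G.degree v := by
    simp [CharTwo.natCast_eq_ite (G.degree v), ← Nat.not_even_iff_odd]
  rw [← ZMod.natCast_eq_zero_iff_even, degree_switchGraph, hn.natCast_zmod_two, one_mul, hmem,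
    hcard, add_zero, CharTwo.add_self_eq_zero]

lemma switchGraph_eq_self_of_even_degree (hn : Odd n) (hG : ∀ v, Even (G.degree v))
    {A : Finset (Fin n)} (hA : ∀ v, Even ((switchGraph G A).degree v)) :
    switchGraph G A = G := by
  have hmem : ∀ v, (if v ∈ A then 1 else 0 : ZMod 2) = #A := fun v => by
    have := (hA v).natCast_zmod_two
    rwa [degree_switchGraph, (hG v).natCast_zmod_two, hn.natCast_zmod_two, zero_add, one_mul,
      CharTwo.add_eq_zero] at this
  refine switchGraph_eq_self G fun v w => ?_
  have := (hmem v).trans (hmem w).symm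
  by_cases hv : v ∈ A <;> by_cases hw : w ∈ A <;> simp_all

end Switching

theorem unique_even_graph_in_switching_class {n : ℕ} (hn : Odd n)
    (G : SimpleGraph (Fin n)) :
    ∃! H : SimpleGraph (Fin n),
      (∃ A : Finset (Fin n), switchGraph G A = H) ∧
      (∀ v, Even (H.neighborSet v).ncard) := by
  simp only [SimpleGraph.ncard_neighborSet_eq_degree]
  set A : Finset (Fin n) := {v | Odd (G.degree v)}
  have hA := even_degree_switchGraph_oddDegreeVertices G hn
  refine ⟨switchGraph G A, ⟨⟨A, rfl⟩, hA⟩, ?_⟩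
  rintro _ ⟨⟨B, rfl⟩, hB⟩
  rw [← symmDiff_symmDiff_cancel_left A B, ← switchGraph_switchGraph] at hB ⊢
  exact switchGraph_eq_self_of_even_degree _ hn hA hB
end

section
/- Let G be a graph of order n = 4k + 1. The Seidel matrix S of G is singular with a nullspace vector all of whose entries are ±1 if and only if G is switching-equivalent to a 2k-regular graph. -/
/-!
Switching at `A` conjugates the Seidel matrix by the diagonal matrix `D` of the sign vector
`σ` of `A`, so the row sums of the switched Seidel matrix form the vector `D S σ`. The row sum at
`v` of a Seidel matrix of order `n` is `n - 1 - 2 deg v`, which for `n = 4k + 1` vanishes exactly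
when `deg v = 2k`. Hence `S σ = 0` iff `G` switched at `A` is `2k`-regular, and every
`±1`-vector is the sign vector of some `A`; such a null vector is nonzero, so `S` is singular.
-/

open Matrix Finset

def seidelMatrix {n : ℕ} (G : SimpleGraph (Fin n)) [DecidableRel G.Adj] :
    Matrix (Fin n) (Fin n) ℤ :=
  Matrix.of fun i j => if i = j then 0 else if G.Adj i j then -1 else 1

instance {n : ℕ} (G : SimpleGraph (Fin n)) [DecidableRel G.Adj] (A : Finset (Fin n)) :
    DecidableRel (switchGraph G A).Adj :=
  fun v w => inferInstanceAs (Decidable (v ≠ w ∧ (G.Adj v w ↔ ((v ∈ A) ↔ (w ∈ A)))))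

def switchSign {n : ℕ} (A : Finset (Fin n)) (i : Fin n) : ℤ :=
  if i ∈ A then -1 else 1

lemma switchSign_eq_one_or_neg_one {n : ℕ} (A : Finset (Fin n)) (i : Fin n) :
    switchSign A i = 1 ∨ switchSign A i = -1 := by
  unfold switchSign
  split_ifs <;> simp

lemma switchSign_mul_self {n : ℕ} (A : Finset (Fin n)) (i : Fin n) :
    switchSign A i * switchSign A i = 1 := by
  rcases switchSign_eq_one_or_neg_one A i with h | h <;> simp [h]

lemma switchSign_ne_zero {n : ℕ} [NeZero n] (A : Finset (Fin n)) : switchSign A ≠ 0 := fun h => by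
  simpa [h] using switchSign_mul_self A 0

lemma exists_switchSign_eq {n : ℕ} {φ : Fin n → ℤ} (hφ : ∀ i, φ i = 1 ∨ φ i = -1) :
    ∃ A : Finset (Fin n), switchSign A = φ := by
  refine ⟨univ.filter (φ · = -1), funext fun i => ?_⟩
  rcases hφ i with h | h <;> simp [switchSign, h]

lemma seidelMatrix_eq {n : ℕ} (G : SimpleGraph (Fin n)) [DecidableRel G.Adj] :
    seidelMatrix G = of (fun _ _ => 1) - 1 - (2 : ℤ) • G.adjMatrix ℤ := by
  ext i j
  simp only [seidelMatrix, Matrix.sub_apply, of_apply, one_apply, Matrix.smul_apply,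
    SimpleGraph.adjMatrix_apply]
  by_cases h : i = j
  · simp [h]
  · by_cases hG : G.Adj i j <;> simp [h, hG]

lemma seidelMatrix_mulVec_one_apply {n : ℕ} (G : SimpleGraph (Fin n)) [DecidableRel G.Adj]
    (v : Fin n) : (seidelMatrix G *ᵥ 1) v = n - 1 - 2 * G.degree v := by
  have hconst : (1 : Fin n → ℤ) = Function.const _ 1 := rfl
  rw [seidelMatrix_eq, sub_mulVec, sub_mulVec, smul_mulVec, one_mulVec, hconst]
  simp only [Pi.sub_apply, Pi.smul_apply, SimpleGraph.adjMatrix_mulVec_const_apply]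
  simp [mulVec, dotProduct]

lemma seidelMatrix_switchGraph {n : ℕ} (G : SimpleGraph (Fin n)) [DecidableRel G.Adj]
    (A : Finset (Fin n)) :
    seidelMatrix (switchGraph G A)
      = diagonal (switchSign A) * seidelMatrix G * diagonal (switchSign A) := by
  ext i j
  rw [mul_diagonal, diagonal_mul]
  by_cases h : i = j
  · simp [seidelMatrix, h]
  · by_cases hi : i ∈ A <;> by_cases hj : j ∈ A <;> by_cases hG : G.Adj i j <;>
      simp [seidelMatrix, switchGraph, switchSign, h, hi, hj, hG]

lemma seidelMatrix_switchGraph_mulVec_one {n : ℕ} (G : SimpleGraph (Fin n)) [DecidableRel G.Adj]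
    (A : Finset (Fin n)) :
    seidelMatrix (switchGraph G A) *ᵥ 1 = switchSign A * (seidelMatrix G *ᵥ switchSign A) := by
  have hdiag : diagonal (switchSign A) *ᵥ 1 = switchSign A := by
    ext i
    simp [mulVec_diagonal]
  rw [seidelMatrix_switchGraph, ← mulVec_mulVec, ← mulVec_mulVec, hdiag]
  ext v
  exact mulVec_diagonal _ _ v

lemma seidelMatrix_mulVec_one_eq_zero_iff {k : ℕ} (G : SimpleGraph (Fin (4 * k + 1)))
    [DecidableRel G.Adj] : seidelMatrix G *ᵥ 1 = 0 ↔ ∀ v, G.degree v = 2 * k := by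
  simp only [funext_iff, seidelMatrix_mulVec_one_apply, Pi.zero_apply]
  refine forall_congr' fun v => ?_
  push_cast
  omega

lemma seidelMatrix_mulVec_switchSign_eq_zero_iff {k : ℕ} (G : SimpleGraph (Fin (4 * k + 1)))
    [DecidableRel G.Adj] (A : Finset (Fin (4 * k + 1))) :
    seidelMatrix G *ᵥ switchSign A = 0 ↔ ∀ v, (switchGraph G A).degree v = 2 * k := by
  rw [← seidelMatrix_mulVec_one_eq_zero_iff, seidelMatrix_switchGraph_mulVec_one, funext_iff,
    funext_iff]
  refine forall_congr' fun v => ?_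
  exact ((IsUnit.of_mul_eq_one _ (switchSign_mul_self A v)).mul_right_eq_zero).symm

theorem seidel_pm_one_nullvector_iff_switch_regular {n k : ℕ} (hn : n = 4 * k + 1)
    (G : SimpleGraph (Fin n)) [DecidableRel G.Adj] :
    ((seidelMatrix G).det = 0 ∧
      ∃ φ : Fin n → ℤ, (∀ i, φ i = 1 ∨ φ i = -1) ∧ (seidelMatrix G).mulVec φ = 0) ↔
    ∃ A : Finset (Fin n), ∀ v, (switchGraph G A).degree v = 2 * k := by
  subst hn
  constructor
  · rintro ⟨-, φ, hφ, hnull⟩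
    obtain ⟨A, rfl⟩ := exists_switchSign_eq hφ
    exact ⟨A, (seidelMatrix_mulVec_switchSign_eq_zero_iff G A).1 hnull⟩
  · rintro ⟨A, hA⟩
    have hnull := (seidelMatrix_mulVec_switchSign_eq_zero_iff G A).2 hA
    exact ⟨exists_mulVec_eq_zero_iff.1 ⟨_, switchSign_ne_zero A, hnull⟩,
      _, switchSign_eq_one_or_neg_one A, hnull⟩
end
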